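/- arXiv:1001.4223 — 2 statements merged into one kernel-verified Lean document; each statement's English description precedes it below -/
import Mathlib

section
/- Let u_1, ..., u_{n+1} be unit vectors in R^n satisfying Σ_{i=1}^{n+1} c_i (u_i ⊗ u_i) = I_n and Σ_{i=1}^{n+1} c_i u_i = 0 for positive reals c_i. Define v_i = √(n/(n+1)) · (-u_i, 1/√n) ∈ R^{n+1} and d_i = ((n+1)/n) c_i. Then each v_i is a unit vector in R^{n+1} and Σ_{i=1}^{n+1} d_i (v_i ⊗ v_i) = I_{n+1}. -/
/-!
Write `x = (y, t)` and `z = (y', t')`. Since `⟪x, vᵢ⟫ = -α (⟪y, uᵢ⟫ - t/√n)` with `α² = n/(n+1)`,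
`∑ dᵢ ⟪x, vᵢ⟫ ⟪vᵢ, z⟫ = ∑ cᵢ (⟪y, uᵢ⟫ - t/√n) (⟪uᵢ, y'⟫ - t'/√n)`. Expanding, the decomposition
of the identity gives `⟪y, y'⟫`, the condition `∑ cᵢ uᵢ = 0` kills the cross terms, and taking
traces gives `∑ cᵢ = n`, so the constant term is `t t'`.
-/

open RealInnerProductSpace

section Frame

variable {E ι : Type*} [NormedAddCommGroup E] [InnerProductSpace ℝ E] [Fintype ι]
  {u : ι → E} {c : ι → ℝ}

theorem sum_mul_inner_mul_inner_of_sum_smul_eq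
    (hI : ∀ x, ∑ i, c i • (⟪x, u i⟫ • u i) = x) (x z : E) :
    ∑ i, c i * (⟪x, u i⟫ * ⟪u i, z⟫) = ⟪x, z⟫ := by
  conv_rhs => rw [← hI x]
  simp only [sum_inner, real_inner_smul_left]

theorem sum_mul_inner_eq_zero_of_sum_smul_eq_zero (hzero : ∑ i, c i • u i = 0) (x : E) :
    ∑ i, c i * ⟪u i, x⟫ = 0 := by
  simpa only [sum_inner, real_inner_smul_left, inner_zero_left] using congrArg (⟪·, x⟫) hzero

theorem sum_eq_finrank_of_sum_smul_eq [FiniteDimensional ℝ E] (hnorm : ∀ i, ‖u i‖ = 1)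
    (hI : ∀ x, ∑ i, c i • (⟪x, u i⟫ • u i) = x) :
    ∑ i, c i = Module.finrank ℝ E := by
  let b := stdOrthonormalBasis ℝ E
  calc ∑ i, c i = ∑ i, c i * ∑ j, ⟪u i, b j⟫ * ⟪b j, u i⟫ := by
        simp only [b.sum_inner_mul_inner, real_inner_self_eq_norm_sq, hnorm, one_pow, mul_one]
    _ = ∑ j, ∑ i, c i * (⟪b j, u i⟫ * ⟪u i, b j⟫) := by
        simp only [Finset.mul_sum]
        rw [Finset.sum_comm]
        simp only [real_inner_comm (u _) (b _)]
    _ = Module.finrank ℝ E := by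
        simp [sum_mul_inner_mul_inner_of_sum_smul_eq hI, b.orthonormal.1]

theorem sum_mul_inner_sub_mul_inner_sub (hI : ∀ x, ∑ i, c i • (⟪x, u i⟫ • u i) = x)
    (hzero : ∑ i, c i • u i = 0) (x z : E) (a b : ℝ) :
    ∑ i, c i * ((⟪x, u i⟫ - a) * (⟪u i, z⟫ - b)) = ⟪x, z⟫ + (∑ i, c i) * a * b := by
  have hx := sum_mul_inner_eq_zero_of_sum_smul_eq_zero hzero x
  have hz := sum_mul_inner_eq_zero_of_sum_smul_eq_zero hzero z
  simp only [real_inner_comm x] at hx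
  rw [← sum_mul_inner_mul_inner_of_sum_smul_eq hI x z, Finset.sum_mul, Finset.sum_mul]
  have hexpand : ∀ i, c i * ((⟪x, u i⟫ - a) * (⟪u i, z⟫ - b)) = c i * (⟪x, u i⟫ * ⟪u i, z⟫)
      - b * (c i * ⟪x, u i⟫) - a * (c i * ⟪u i, z⟫) + c i * a * b := fun i => by ring
  simp only [hexpand, Finset.sum_add_distrib, Finset.sum_sub_distrib, ← Finset.mul_sum, hx, hz]
  ring

end Frame

namespace EuclideanSpace

def init {n : ℕ} (x : EuclideanSpace ℝ (Fin (n + 1))) : EuclideanSpace ℝ (Fin n) :=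
  WithLp.toLp 2 (Fin.init x)

theorem inner_eq_inner_init_add {n : ℕ} (x z : EuclideanSpace ℝ (Fin (n + 1))) :
    ⟪x, z⟫ = ⟪x.init, z.init⟫ + x (Fin.last n) * z (Fin.last n) := by
  simp only [PiLp.inner_apply, Fin.sum_univ_castSucc, init, Fin.init, RCLike.inner_apply,
    conj_trivial, mul_comm (z _)]

end EuclideanSpace

theorem john_lift_general (n : ℕ) (hn : 1 ≤ n)
    (u : Fin (n + 1) → EuclideanSpace ℝ (Fin n)) (c : Fin (n + 1) → ℝ)
    (hnorm : ∀ i, ‖u i‖ = 1)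
    (hI : ∀ x : EuclideanSpace ℝ (Fin n), ∑ i, c i • (⟪x, u i⟫ • u i) = x)
    (hzero : ∑ i, c i • u i = 0)
    (v : Fin (n + 1) → EuclideanSpace ℝ (Fin (n + 1)))
    (hv : ∀ i (j : Fin (n + 1)), v i j =
      if h : (j : ℕ) < n then Real.sqrt ((n : ℝ) / (n + 1)) * (-(u i ⟨j, h⟩))
      else Real.sqrt ((n : ℝ) / (n + 1)) * (1 / Real.sqrt n))
    (d : Fin (n + 1) → ℝ) (hd : ∀ i, d i = ((n : ℝ) + 1) / n * c i) :
    (∀ i, ‖v i‖ = 1) ∧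
      ∀ x : EuclideanSpace ℝ (Fin (n + 1)), ∑ i, d i • (⟪x, v i⟫ • v i) = x := by
  have hn0 : (0 : ℝ) < n := by exact_mod_cast hn
  set α := Real.sqrt ((n : ℝ) / (n + 1))
  set s := Real.sqrt n
  have hα : α ^ 2 = n / (n + 1) := Real.sq_sqrt (by positivity)
  have hs : s ^ 2 = n := Real.sq_sqrt hn0.le
  have hs0 : s ≠ 0 := (Real.sqrt_pos.mpr hn0).ne'
  have hinit : ∀ i, (v i).init = -α • u i := fun i => by
    ext j; simp [EuclideanSpace.init, Fin.init, hv]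
  have hlast : ∀ i, v i (Fin.last n) = α * (1 / s) := fun i => by
    rw [hv, dif_neg (by simp)]
  have hvx : ∀ i x, ⟪x, v i⟫ = -α * (⟪x.init, u i⟫ - x (Fin.last n) / s) := fun i x => by
    rw [EuclideanSpace.inner_eq_inner_init_add, hinit, hlast, real_inner_smul_right]
    ring
  refine ⟨fun i => ?_, fun x => ext_inner_right ℝ fun z => ?_⟩
  · rw [← pow_eq_one_iff_of_nonneg (norm_nonneg _) two_ne_zero, ← real_inner_self_eq_norm_sq,
      EuclideanSpace.inner_eq_inner_init_add, hinit, hlast, real_inner_smul_left,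
      real_inner_smul_right, real_inner_self_eq_norm_sq, hnorm]
    field_simp
    rw [hα, hs]
    field_simp
  · have hc : ∑ i, c i = n := by simpa using sum_eq_finrank_of_sum_smul_eq hnorm hI
    have hsummand : ∀ i, d i * (⟪x, v i⟫ * ⟪v i, z⟫) = ((n + 1) / n * α ^ 2) *
        (c i * ((⟪x.init, u i⟫ - x (Fin.last n) / s) * (⟪u i, z.init⟫ - z (Fin.last n) / s))) :=
      fun i => by
        rw [real_inner_comm z, hvx, hvx, hd, real_inner_comm z.init]
        ring
    simp only [sum_inner, real_inner_smul_left, hsummand, ← Finset.mul_sum,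
      sum_mul_inner_sub_mul_inner_sub hI hzero, hc, EuclideanSpace.inner_eq_inner_init_add x z, hα]
    field_simp
    rw [hs]
    ring

/-- Lifting John's decomposition from R^n to R^{n+1}:
with v_i = √(n/(n+1))·(-u_i, 1/√n) and d_i = ((n+1)/n)·c_i, each v_i is a unit
vector and Σ d_i v_i ⊗ v_i = I_{n+1}. -/
theorem john_lift (n : ℕ) (hn : 1 ≤ n)
    (u : Fin (n + 1) → EuclideanSpace ℝ (Fin n)) (c : Fin (n + 1) → ℝ)
    (hnorm : ∀ i, ‖u i‖ = 1) (hc : ∀ i, 0 < c i)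
    (hI : ∀ x : EuclideanSpace ℝ (Fin n), ∑ i, c i • (⟪x, u i⟫ • u i) = x)
    (hzero : ∑ i, c i • u i = 0)
    (v : Fin (n + 1) → EuclideanSpace ℝ (Fin (n + 1)))
    (hv : ∀ i (j : Fin (n + 1)), v i j =
      if h : (j : ℕ) < n then Real.sqrt ((n : ℝ) / (n + 1)) * (-(u i ⟨j, h⟩))
      else Real.sqrt ((n : ℝ) / (n + 1)) * (1 / Real.sqrt n))
    (d : Fin (n + 1) → ℝ) (hd : ∀ i, d i = ((n : ℝ) + 1) / n * c i) :
    (∀ i, ‖v i‖ = 1) ∧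
      ∀ x : EuclideanSpace ℝ (Fin (n + 1)), ∑ i, d i • (⟪x, v i⟫ • v i) = x :=
  john_lift_general n hn u c hnorm hI hzero v hv d hd
end

section
/- The volume of a regular n-simplex in R^n whose inscribed ball is the unit ball equals √(n^n (n+1)^{n+1}) / n!. -/
/-!
The barycentric coordinates of a regular simplex with edge length `s`, centroid `c` and `N`
vertices `A i` are `x ↦ 1/N + (2/s²)⟪A i - c, x - c⟫`, affine functions whose gradients all have
the same norm `γ`. A ball `B(z, r)` lies in the simplex iff `r γ` is at most every coordinate
of `z`. As the coordinates sum to `1`, a unit ball inside forces `N γ ≤ 1`, while the ball of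
radius `1/(N γ)` around the centroid fits, so maximality of the unit ball gives `N γ = 1`,
i.e. `s² = 2 N (N - 1)`. The simplex is the image of the corner `{y ≥ 0, ∑ y ≤ 1}`, of volume
`1/n!`, under an affine map whose linear part sends the unit vectors to the edges `A j - A 0`;
its squared determinant is the Gram determinant `(s²/2)ⁿ (n + 1)` of those edges.
-/

open RealInnerProductSpace MeasureTheory Set Pointwise Metric

def cornerSimplex (n : ℕ) (t : ℝ) : Set (Fin n → ℝ) :=
  {y | (∀ i, 0 ≤ y i) ∧ ∑ i, y i ≤ t}

lemma isClosed_cornerSimplex (n : ℕ) (t : ℝ) : IsClosed (cornerSimplex n t) := by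
  simp only [cornerSimplex, ofPred_and, ofPred_forall]
  exact (isClosed_iInter fun i => isClosed_le continuous_const (continuous_apply i)).inter
    (isClosed_le (by fun_prop) continuous_const)

lemma convex_cornerSimplex (n : ℕ) (t : ℝ) : Convex ℝ (cornerSimplex n t) := by
  simp only [cornerSimplex, ofPred_and, ofPred_forall]
  refine (convex_iInter fun i => convex_halfSpace_ge (LinearMap.proj i).isLinear 0).inter
    (convex_halfSpace_le ⟨fun x y => ?_, fun c x => ?_⟩ t)
  · simp [Finset.sum_add_distrib]
  · simp [Finset.mul_sum]

lemma cornerSimplex_eq_empty {n : ℕ} {t : ℝ} (ht : t < 0) : cornerSimplex n t = ∅ :=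
  eq_empty_of_forall_notMem fun _ ⟨hy, hsum⟩ =>
    (Finset.sum_nonneg fun i _ => hy i).not_gt (hsum.trans_lt ht)

lemma cornerSimplex_succ (n : ℕ) (t : ℝ) :
    cornerSimplex (n + 1) t = MeasurableEquiv.piFinSuccAbove (fun _ => ℝ) 0 ⁻¹'
      {p | 0 ≤ p.1 ∧ p.2 ∈ cornerSimplex n (t - p.1)} := by
  ext y
  simp [cornerSimplex, Fin.forall_fin_succ, Fin.sum_univ_succ, le_sub_iff_add_le', Fin.tail,
    and_assoc]

lemma integral_sub_pow_div_factorial (n : ℕ) (t : ℝ) :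
    ∫ a in (0)..t, (t - a) ^ n / n.factorial = t ^ (n + 1) / (n + 1).factorial := by
  simp [intervalIntegral.integral_div, Nat.factorial_succ,
    intervalIntegral.integral_comp_sub_left (· ^ n)]
  field_simp

lemma volume_cornerSimplex (n : ℕ) {t : ℝ} (ht : 0 ≤ t) :
    volume (cornerSimplex n t) = ENNReal.ofReal (t ^ n / n.factorial) := by
  induction n generalizing t with
  | zero =>
    have : cornerSimplex 0 t = univ := by ext; simp [cornerSimplex, ht]
    simp [this, volume_pi]
  | succ n ih =>
    set T : Set (ℝ × (Fin n → ℝ)) := {p | 0 ≤ p.1 ∧ p.2 ∈ cornerSimplex n (t - p.1)}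
    have hT : MeasurableSet T := by
      simp only [T, cornerSimplex, mem_ofPred_eq]
      measurability
    have hslice (a : ℝ) : volume (Prod.mk a ⁻¹' T) =
        (Icc 0 t).indicator (fun a => ENNReal.ofReal ((t - a) ^ n / n.factorial)) a := by
      by_cases ha : 0 ≤ a
      · rcases le_or_gt a t with hat | hat
        · simp [T, ha, ih (sub_nonneg.2 hat), hat]
        · simp [T, ha, cornerSimplex_eq_empty (sub_neg.2 hat), hat]
      · simp [T, ha]
    rw [cornerSimplex_succ, (volume_preserving_piFinSuccAbove (fun _ => ℝ) 0).measure_preimage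
      hT.nullMeasurableSet, Measure.volume_eq_prod, Measure.prod_apply hT,
      lintegral_congr hslice, lintegral_indicator measurableSet_Icc,
      ← ofReal_integral_eq_lintegral_ofReal, integral_Icc_eq_integral_Ioc,
      ← intervalIntegral.integral_of_le ht, integral_sub_pow_div_factorial]
    · exact (by fun_prop : Continuous fun a : ℝ => (t - a) ^ n / n.factorial).integrableOn_Icc
    · filter_upwards [ae_restrict_mem measurableSet_Icc] with a ha
      have : 0 ≤ t - a := sub_nonneg.2 ha.2
      positivity

noncomputable def cornerVertex (n : ℕ) : Fin (n + 1) → EuclideanSpace ℝ (Fin n) :=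
  Fin.cons 0 fun j => EuclideanSpace.single j 1

lemma convexHull_range_cornerVertex (n : ℕ) :
    convexHull ℝ (range (cornerVertex n)) = WithLp.ofLp ⁻¹' cornerSimplex n 1 := by
  refine (convexHull_min ?_ ?_).antisymm fun y ⟨hy, hsum⟩ => ?_
  · rintro _ ⟨i, rfl⟩
    induction i using Fin.cases <;>
      simp [cornerVertex, cornerSimplex, PiLp.single_apply, apply_ite]
  · exact (convex_cornerSimplex n 1).is_linear_preimage
      (WithLp.linearEquiv 2 ℝ (Fin n → ℝ)).isLinear
  · let w : Fin (n + 1) → ℝ := Fin.cons (1 - ∑ j, y j) fun j => y j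
    have hw : ∀ i ∈ Finset.univ, 0 ≤ w i := by
      intro i _
      induction i using Fin.cases <;> simp [w, hy, hsum]
    have hw1 : ∑ i, w i = 1 := by simp [w, Fin.sum_univ_succ]
    convert (convex_convexHull ℝ (range (cornerVertex n))).sum_mem hw hw1
      fun i _ => subset_convexHull ℝ _ (mem_range_self i)
    simpa [w, cornerVertex, Fin.sum_univ_succ] using
      ((EuclideanSpace.basisFun (Fin n) ℝ).sum_repr y).symm

section SimplexVolume

variable {n : ℕ}

noncomputable def edgeMap (A : Fin (n + 1) → EuclideanSpace ℝ (Fin n)) :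
    EuclideanSpace ℝ (Fin n) →ₗ[ℝ] EuclideanSpace ℝ (Fin n) :=
  (EuclideanSpace.basisFun (Fin n) ℝ).toBasis.constr ℝ fun j => A j.succ - A 0

lemma add_edgeMap_cornerVertex (A : Fin (n + 1) → EuclideanSpace ℝ (Fin n)) (i : Fin (n + 1)) :
    A 0 + edgeMap A (cornerVertex n i) = A i := by
  induction i using Fin.cases <;> simp [edgeMap, cornerVertex]

lemma convexHull_range_eq_vadd_image (A : Fin (n + 1) → EuclideanSpace ℝ (Fin n)) :
    convexHull ℝ (range A) = A 0 +ᵥ edgeMap A '' convexHull ℝ (range (cornerVertex n)) := by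
  rw [LinearMap.image_convexHull, ← convexHull_vadd, ← range_comp, ← range_vadd]
  simp [add_edgeMap_cornerVertex]

lemma volume_convexHull_range (A : Fin (n + 1) → EuclideanSpace ℝ (Fin n)) :
    volume (convexHull ℝ (range A)) =
      ENNReal.ofReal (|LinearMap.det (edgeMap A)| / n.factorial) := by
  rw [convexHull_range_eq_vadd_image, measure_vadd, Measure.addHaar_image_linearMap,
    convexHull_range_cornerVertex, (PiLp.volume_preserving_ofLp (Fin n)).measure_preimage
      (isClosed_cornerSimplex n 1).measurableSet.nullMeasurableSet,
    volume_cornerSimplex n zero_le_one, one_pow, ← ENNReal.ofReal_mul (abs_nonneg _),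
    mul_one_div]

lemma sq_abs_det_edgeMap (A : Fin (n + 1) → EuclideanSpace ℝ (Fin n)) :
    |LinearMap.det (edgeMap A)| ^ 2 = (Matrix.gram ℝ fun j : Fin n => A j.succ - A 0).det := by
  rw [← LinearMap.normDet_eq_abs_det]
  simpa [edgeMap] using (edgeMap A).normDet_sq_eq_det_gram (EuclideanSpace.basisFun (Fin n) ℝ)

end SimplexVolume

section Equilateral

variable {E : Type*} [NormedAddCommGroup E] [InnerProductSpace ℝ E]

lemma inner_sub_sub_eq_dist_sq (a b c d : E) :
    ⟪a - b, c - d⟫ = (dist a d ^ 2 + dist b c ^ 2 - dist a c ^ 2 - dist b d ^ 2) / 2 := by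
  simp only [dist_eq_norm, ← real_inner_self_eq_norm_sq, inner_sub_left, inner_sub_right,
    real_inner_comm a, real_inner_comm b]
  ring

lemma inner_sub_sub_of_dist_eq {ι : Type*} [DecidableEq ι] {A : ι → E} {s : ℝ}
    (h : ∀ i j, i ≠ j → dist (A i) (A j) = s) (i j k l : ι) :
    ⟪A i - A k, A j - A l⟫ = s ^ 2 / 2 *
      ((if i = j then 1 else 0) + (if k = l then 1 else 0) -
        (if i = l then 1 else 0) - (if k = j then 1 else 0)) := by
  have hd (i j : ι) : dist (A i) (A j) ^ 2 = s ^ 2 * (1 - if i = j then 1 else 0) := by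
    by_cases hij : i = j <;> simp [hij, h]
  rw [inner_sub_sub_eq_dist_sq, hd, hd, hd, hd]
  ring

lemma det_gram_of_dist_eq {n : ℕ} {A : Fin (n + 1) → E} {s : ℝ}
    (h : ∀ i j, i ≠ j → dist (A i) (A j) = s) :
    (Matrix.gram ℝ fun j : Fin n => A j.succ - A 0).det = (s ^ 2 / 2) ^ n * (n + 1) := by
  have hgram : Matrix.gram ℝ (fun j : Fin n => A j.succ - A 0) = (s ^ 2 / 2) •
      (1 + Matrix.replicateCol (Fin 1) (fun _ : Fin n => (1 : ℝ)) *
        Matrix.replicateRow (Fin 1) (fun _ : Fin n => (1 : ℝ))) := by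
    ext i j
    simp [Matrix.gram_apply, inner_sub_sub_of_dist_eq h, Matrix.one_apply, Matrix.mul_apply,
      (Fin.succ_ne_zero _).symm]
  rw [hgram, Matrix.det_smul, Matrix.det_one_add_mul_comm]
  simp [Matrix.mul_apply, add_comm]

lemma sub_centroid_eq {ι : Type*} [Fintype ι] (A : ι → E) (i : ι) :
    A i - Finset.univ.centroid ℝ A = (Fintype.card ι : ℝ)⁻¹ • ∑ k, (A i - A k) := by
  have hN : (Fintype.card ι : ℝ) ≠ 0 := Nat.cast_ne_zero.2 (Fintype.card_pos_iff.2 ⟨i⟩).ne'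
  rw [Finset.centroid_def, Finset.affineCombination_eq_linear_combination _ _ _
    (Finset.univ.sum_centroidWeights_eq_one_of_nonempty ℝ ⟨i, Finset.mem_univ i⟩)]
  simp [Finset.centroidWeights_apply, Finset.sum_sub_distrib, smul_sub, ← Finset.smul_sum,
    ← Nat.cast_smul_eq_nsmul ℝ, smul_smul, hN]

variable {ι : Type*} [Fintype ι] [DecidableEq ι] {s : ℝ}

lemma inner_sub_centroid_of_dist_eq {A : ι → E} (h : ∀ i j, i ≠ j → dist (A i) (A j) = s)
    (i j : ι) :
    ⟪A i - Finset.univ.centroid ℝ A, A j - Finset.univ.centroid ℝ A⟫ =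
      s ^ 2 / 2 * ((if i = j then 1 else 0) - (Fintype.card ι : ℝ)⁻¹) := by
  simp only [sub_centroid_eq, inner_smul_left, inner_smul_right, sum_inner, inner_sum,
    inner_sub_sub_of_dist_eq h]
  have hN : (Fintype.card ι : ℝ) ≠ 0 := Nat.cast_ne_zero.2 (Fintype.card_pos_iff.2 ⟨i⟩).ne'
  simp [Finset.sum_add_distrib, Finset.sum_sub_distrib, ← Finset.mul_sum]
  split_ifs <;> field_simp
  ring

lemma AffineBasis.coord_eq_of_dist_eq (b : AffineBasis ι ℝ E)
    (h : ∀ i j, i ≠ j → dist (b i) (b j) = s) (hs : s ≠ 0) (i : ι) (x : E) :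
    b.coord i x = (Fintype.card ι : ℝ)⁻¹ +
      ⟪(2 / s ^ 2) • (b i - Finset.univ.centroid ℝ b), x - Finset.univ.centroid ℝ b⟫ := by
  have hx : x - Finset.univ.centroid ℝ b =
      ∑ j, b.coord j x • (b j - Finset.univ.centroid ℝ b) := by
    conv_lhs => rw [← b.linear_combination_coord_eq_self x]
    simp [smul_sub, Finset.sum_sub_distrib, ← Finset.sum_smul]
  rw [hx, inner_sum]
  simp only [real_inner_smul_left, real_inner_smul_right, inner_sub_centroid_of_dist_eq h]
  field_simp
  simp [mul_sub, Finset.sum_sub_distrib, ← Finset.sum_mul]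

end Equilateral

section Inball

variable {E : Type*} [NormedAddCommGroup E] [InnerProductSpace ℝ E]

lemma closedBall_subset_setOf_nonneg_iff {f : E → ℝ} {g z : E} {r : ℝ}
    (hf : ∀ x, f x = f z + ⟪g, x - z⟫) (hr : 0 ≤ r) :
    closedBall z r ⊆ {x | 0 ≤ f x} ↔ r * ‖g‖ ≤ f z := by
  refine ⟨fun h => ?_, fun h x hx => ?_⟩
  · rcases eq_or_ne g 0 with rfl | hg
    · simpa using h (mem_closedBall_self hr)
    have hmem : z - (r / ‖g‖) • g ∈ closedBall z r := by
      simp [norm_smul, abs_of_nonneg hr, hg]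
    have := h hmem
    rw [mem_ofPred_eq, hf] at this
    simp only [sub_sub_cancel_left, inner_neg_right, real_inner_smul_right,
      real_inner_self_eq_norm_sq] at this
    field_simp at this
    linarith
  · have hxz : ‖x - z‖ ≤ r := by rwa [← dist_eq_norm]
    have := (abs_le.1 ((abs_real_inner_le_norm g (x - z)).trans
      (mul_le_mul_of_nonneg_left hxz (norm_nonneg g)))).1
    rw [mem_ofPred_eq, hf]
    linarith [mul_comm r ‖g‖]

variable {ι : Type*} [Fintype ι]

theorem AffineBasis.card_mul_eq_one_of_inball (b : AffineBasis ι ℝ E)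
    {c z₀ : E} {g : ι → E} {γ : ℝ}
    (hcoord : ∀ i x, b.coord i x = (Fintype.card ι : ℝ)⁻¹ + ⟪g i, x - c⟫)
    (hg : ∀ i, ‖g i‖ = γ) (hball : closedBall z₀ 1 ⊆ convexHull ℝ (range b))
    (hmax : ∀ z r, closedBall z r ⊆ convexHull ℝ (range b) → r ≤ 1) :
    Fintype.card ι * γ = 1 := by
  have hsub (z : E) {r : ℝ} (hr : 0 ≤ r) :
      closedBall z r ⊆ convexHull ℝ (range b) ↔ ∀ i, r * γ ≤ b.coord i z := by
    rw [b.convexHull_eq_nonneg_coord, ofPred_forall, subset_iInter_iff]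
    refine forall_congr' fun i => ?_
    rw [← hg i]
    refine closedBall_subset_setOf_nonneg_iff (fun x => ?_) hr
    rw [hcoord, hcoord, add_assoc, ← inner_add_right, sub_add_sub_cancel']
  have hle : Fintype.card ι * γ ≤ 1 := by
    have := (hsub z₀ zero_le_one).1 hball
    calc (Fintype.card ι : ℝ) * γ = ∑ i, 1 * γ := by simp
      _ ≤ ∑ i, b.coord i z₀ := Finset.sum_le_sum fun i _ => this i
      _ = 1 := b.sum_coord_apply_eq_one z₀
  have hcenter {r : ℝ} (hr : 0 ≤ r) (hrγ : r * γ ≤ (Fintype.card ι : ℝ)⁻¹) : r ≤ 1 :=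
    hmax c r ((hsub c hr).2 fun i => by simpa [hcoord] using hrγ)
  have hN : (0 : ℝ) < Fintype.card ι := by
    have := b.nonempty
    exact_mod_cast Fintype.card_pos
  have hγ : 0 < γ := by
    obtain ⟨i⟩ := b.nonempty
    refine (hg i ▸ norm_nonneg (g i)).lt_of_ne fun h0 => ?_
    have := hcenter zero_le_two (by rw [← h0, mul_zero]; positivity)
    norm_num at this
  have := hcenter (r := (Fintype.card ι * γ)⁻¹) (by positivity) (le_of_eq (by field_simp))
  rw [inv_le_one₀ (by positivity)] at this
  linarith

theorem AffineBasis.sq_dist_eq_of_inball [DecidableEq ι] (b : AffineBasis ι ℝ E) {s : ℝ}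
    (h : ∀ i j, i ≠ j → dist (b i) (b j) = s) (hs : s ≠ 0) {z₀ : E}
    (hball : closedBall z₀ 1 ⊆ convexHull ℝ (range b))
    (hmax : ∀ z r, closedBall z r ⊆ convexHull ℝ (range b) → r ≤ 1) :
    s ^ 2 = 2 * Fintype.card ι * ((Fintype.card ι : ℝ) - 1) := by
  have hN : (1 : ℝ) ≤ Fintype.card ι := by
    have := b.nonempty
    exact Nat.one_le_cast.2 Fintype.card_pos
  have hg (i : ι) : ‖(2 / s ^ 2) • (b i - Finset.univ.centroid ℝ b)‖ =
      √((2 / s ^ 2) ^ 2 * (s ^ 2 / 2 * (1 - (Fintype.card ι : ℝ)⁻¹))) := by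
    rw [norm_eq_sqrt_real_inner, real_inner_smul_left, real_inner_smul_right,
      inner_sub_centroid_of_dist_eq h, if_pos rfl, ← mul_assoc, ← sq]
  have hNγ := b.card_mul_eq_one_of_inball (b.coord_eq_of_dist_eq h hs) hg hball hmax
  have hq : 0 ≤ 1 - (Fintype.card ι : ℝ)⁻¹ := sub_nonneg.2 (inv_le_one_of_one_le₀ hN)
  have := congrArg (· ^ 2) hNγ
  rw [mul_pow, Real.sq_sqrt (mul_nonneg (sq_nonneg _) (mul_nonneg (by positivity) hq)),
    one_pow] at this
  field_simp at this
  linarith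

end Inball

/-- The volume of a regular n-simplex whose inscribed ball is the unit
ball equals √(nⁿ(n+1)^{n+1}) / n!. -/
theorem regular_simplex_volume (n : ℕ) (hn : 1 ≤ n)
    (A : Fin (n + 1) → EuclideanSpace ℝ (Fin n))
    (hA : AffineIndependent ℝ A)
    (hreg : ∀ i j k l, i ≠ j → k ≠ l → dist (A i) (A j) = dist (A k) (A l))
    (hball : Metric.closedBall 0 1 ⊆ convexHull ℝ (Set.range A))
    (hmax : ∀ (z : EuclideanSpace ℝ (Fin n)) (r : ℝ),
      Metric.closedBall z r ⊆ convexHull ℝ (Set.range A) → r ≤ 1) :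
    volume (convexHull ℝ (Set.range A)) =
      ENNReal.ofReal (Real.sqrt ((n : ℝ) ^ n * ((n : ℝ) + 1) ^ (n + 1)) / n.factorial) := by
  have h01 : (0 : Fin (n + 1)) ≠ 1 := by
    simp [Fin.ext_iff, Nat.mod_eq_of_lt (show 1 < n + 1 by omega)]
  have hequi (i j) (hij : i ≠ j) : dist (A i) (A j) = dist (A 0) (A 1) := hreg i j 0 1 hij h01
  have hs : dist (A 0) (A 1) ≠ 0 := dist_ne_zero.2 (hA.injective.ne h01)
  let b : AffineBasis (Fin (n + 1)) ℝ (EuclideanSpace ℝ (Fin n)) :=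
    ⟨A, hA, hA.affineSpan_eq_top_iff_card_eq_finrank_add_one.2 (by simp)⟩
  have hs2 : dist (A 0) (A 1) ^ 2 = 2 * (n + 1) * n := by
    simpa using b.sq_dist_eq_of_inball hequi hs hball hmax
  have hdet : |LinearMap.det (edgeMap A)| = √(n ^ n * (n + 1) ^ (n + 1)) := by
    rw [← Real.sqrt_sq (abs_nonneg _), sq_abs_det_edgeMap, det_gram_of_dist_eq hequi, hs2,
      show 2 * ((n : ℝ) + 1) * n / 2 = n * (n + 1) by ring, mul_pow, pow_succ]
    ring_nf
  rw [volume_convexHull_range, hdet]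
end
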